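/- The bi-invariant geodesic regression estimator is equivariant under joint left translations: if (ĝ₀, ĝ₁) satisfies the defining equations Σᵢ (1−tᵢ)² (d_{ĝ₀}γ(tᵢ; ·, ĝ₁))^{-1}(Log_{γ(tᵢ)}(fᵢ)) = 0 and Σᵢ tᵢ² (d_{ĝ₁}γ(tᵢ; ĝ₀, ·))^{-1}(Log_{γ(tᵢ)}(fᵢ)) = 0 for data (fᵢ, tᵢ), then for any h ∈ G the pair (hĝ₀, hĝ₁) satisfies the same equations for the data (hfᵢ, tᵢ). -/

import Mathlib

/-!
Left translation `L_h` commutes with everything in the defining equations: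
`γ(t; hg₀, hg₁) = h γ(t; g₀, g₁)`, and by the chain rule `Log_{hg}(hf) = d_g L_h (Log_g f)`.
Differentiating the semiconjugacy `L_h ∘ γ(t; ·, g₁) = γ(t; ·, hg₁) ∘ L_h` (and likewise in the
second endpoint) shows that each translated summand is `d L_h` applied to the original one, so the
translated sums are images of the original ones under the linear map `d L_h`, hence zero.
-/

section

variable {E : Type*} [NormedAddCommGroup E] [NormedSpace ℝ E]
  {H : Type*} [TopologicalSpace H] (I : ModelWithCorners ℝ E H)
  {G : Type*} [TopologicalSpace G] [ChartedSpace H G] [Group G]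

/-- Geodesic of the canonical Cartan–Schouten connection between `g₀` and `g₁`,
parametrized by its endpoints: `γ(t; g₀, g₁) = g₀ · exp(t · log(g₀⁻¹ g₁))`,
for abstract group exponential `exp` and logarithm `log`. -/
def ccsGeodesic (expm : E → G) (logm : G → E) (t : ℝ) (g₀ g₁ : G) : G :=
  g₀ * expm (t • logm (g₀⁻¹ * g₁))

/-- Connection logarithm of the CCS connection: `Log_g(f) = d_e L_g (log(g⁻¹ f))`. -/
noncomputable def ccsLog [LieGroup I (⊤ : ℕ∞) G] (logm : G → E) (g f : G) :
    TangentSpace I g :=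
  mfderiv I I (fun x : G => g * x) (1 : G) (logm (g⁻¹ * f))

omit [TopologicalSpace G] in
theorem ccsGeodesic_mul_left (expm : E → G) (logm : G → E) (t : ℝ) (h g₀ g₁ : G) :
    ccsGeodesic expm logm t (h * g₀) (h * g₁) = h * ccsGeodesic expm logm t g₀ g₁ := by
  simp only [ccsGeodesic, mul_inv_rev, mul_assoc, inv_mul_cancel_left]

theorem ccsLog_mul_left [LieGroup I (⊤ : ℕ∞) G] (logm : G → E) (h g f : G) :
    (ccsLog I logm (h * g) (h * f) : E) = mfderiv I I (h * ·) g (ccsLog I logm g f) := by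
  have hL : (fun x : G => h * g * x) = (h * ·) ∘ (g * ·) := by ext x; simp [mul_assoc]
  have hinv : (h * g)⁻¹ * (h * f) = g⁻¹ * f := by group
  simp only [ccsLog, hinv]
  rw [hL]
  exact mfderiv_comp_apply_of_eq 1 (mdifferentiableAt_mul_left (I := I))
    (mdifferentiableAt_mul_left (I := I)) (mul_one g) _

section Semiconj

variable {M : Type*} [TopologicalSpace M] [ChartedSpace H M]

theorem mdifferentiableAt_of_mfderiv_eq_equiv [Nontrivial E] {F : M → M} {x : M}
    {D : E ≃L[ℝ] E} (hD : (D : E →L[ℝ] E) = mfderiv I I F x) :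
    MDifferentiableAt I I F x := by
  by_contra hF
  rw [mfderiv_zero_of_not_mdifferentiableAt hF] at hD
  obtain ⟨v, hv⟩ := exists_ne (0 : E)
  exact hv (D.map_eq_zero_iff.mp congr($hD v))

theorem symm_mfderiv_apply_of_semiconj [Nontrivial E] {φ F F' : M → M}
    (hφ : MDifferentiable I I φ) (hsemi : Function.Semiconj φ F F') {x : M}
    {D D' : E ≃L[ℝ] E} (hD : (D : E →L[ℝ] E) = mfderiv I I F x)
    (hD' : (D' : E →L[ℝ] E) = mfderiv I I F' (φ x)) (v : E) :
    D'.symm (mfderiv I I φ (F x) v) = mfderiv I I φ x (D.symm v) := by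
  obtain ⟨w, rfl⟩ := D.surjective v
  rw [D.symm_apply_apply]
  refine D'.symm_apply_eq.mpr ?_
  have hF := mdifferentiableAt_of_mfderiv_eq_equiv I hD
  have hF' := mdifferentiableAt_of_mfderiv_eq_equiv I hD'
  have hφF := mfderiv_comp_apply x (hφ (F x)) hF w
  have hF'φ := mfderiv_comp_apply x hF' (hφ x) w
  rw [hsemi.comp_eq] at hφF
  rw [← ContinuousLinearEquiv.coe_coe, ← ContinuousLinearEquiv.coe_coe D', hD, hD']
  exact hφF.symm.trans hF'φ

theorem sum_smul_symm_mfderiv_eq_zero_of_semiconj [Nontrivial E] {ι : Type*} [Fintype ι]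
    {φ : M → M} (hφ : MDifferentiable I I φ) {F F' : ι → M → M}
    (hsemi : ∀ i, Function.Semiconj φ (F i) (F' i)) {x : M} {D D' : ι → E ≃L[ℝ] E}
    (hD : ∀ i, (D i : E →L[ℝ] E) = mfderiv I I (F i) x)
    (hD' : ∀ i, (D' i : E →L[ℝ] E) = mfderiv I I (F' i) (φ x)) (c : ι → ℝ) (v : ι → E)
    (hv : ∑ i, c i • (D i).symm (v i) = 0) :
    ∑ i, c i • (D' i).symm (mfderiv I I φ (F i x) (v i)) = 0 := by
  let L : E →L[ℝ] E := mfderiv I I φ x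
  calc ∑ i, c i • (D' i).symm (mfderiv I I φ (F i x) (v i))
      = ∑ i, c i • L ((D i).symm (v i)) := Finset.sum_congr rfl fun i _ => by
        rw [symm_mfderiv_apply_of_semiconj I hφ (hsemi i) (hD i) (hD' i)]; rfl
    _ = L (∑ i, c i • (D i).symm (v i)) := by simp only [map_sum, map_smul]
    _ = 0 := by rw [hv, map_zero]

end Semiconj

theorem stmt10 [LieGroup I (⊤ : ℕ∞) G] (expm : E → G) (logm : G → E)
    (N : ℕ) (f : Fin N → G) (t : Fin N → ℝ)
    (g₀ g₁ h : G)
    (D₀ D₁ D₀' D₁' : Fin N → (E ≃L[ℝ] E))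
    (hD₀ : ∀ i, (D₀ i : E →L[ℝ] E)
      = mfderiv I I (fun x : G => ccsGeodesic expm logm (t i) x g₁) g₀)
    (hD₁ : ∀ i, (D₁ i : E →L[ℝ] E)
      = mfderiv I I (fun y : G => ccsGeodesic expm logm (t i) g₀ y) g₁)
    (hD₀' : ∀ i, (D₀' i : E →L[ℝ] E)
      = mfderiv I I (fun x : G => ccsGeodesic expm logm (t i) x (h * g₁)) (h * g₀))
    (hD₁' : ∀ i, (D₁' i : E →L[ℝ] E)
      = mfderiv I I (fun y : G => ccsGeodesic expm logm (t i) (h * g₀) y) (h * g₁))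
    (heq₀ : ∑ i, (1 - t i) ^ 2 •
      (D₀ i).symm (ccsLog I logm (ccsGeodesic expm logm (t i) g₀ g₁) (f i)) = 0)
    (heq₁ : ∑ i, (t i) ^ 2 •
      (D₁ i).symm (ccsLog I logm (ccsGeodesic expm logm (t i) g₀ g₁) (f i)) = 0) :
    (∑ i, (1 - t i) ^ 2 •
      (D₀' i).symm
        (ccsLog I logm (ccsGeodesic expm logm (t i) (h * g₀) (h * g₁)) (h * f i)) = 0) ∧
    (∑ i, (t i) ^ 2 •
      (D₁' i).symm
        (ccsLog I logm (ccsGeodesic expm logm (t i) (h * g₀) (h * g₁)) (h * f i)) = 0) := by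
  -- The chain rule needs differentiability, which an invertible `mfderiv` gives only if `E ≠ 0`.
  rcases subsingleton_or_nontrivial E with hE | hE
  · exact ⟨Subsingleton.elim _ _, Subsingleton.elim _ _⟩
  have hLog : ∀ i,
      (ccsLog I logm (ccsGeodesic expm logm (t i) (h * g₀) (h * g₁)) (h * f i) : E)
      = mfderiv I I (h * ·) (ccsGeodesic expm logm (t i) g₀ g₁)
          (ccsLog I logm (ccsGeodesic expm logm (t i) g₀ g₁) (f i)) := fun i => by
    rw [← ccsLog_mul_left, ccsGeodesic_mul_left]
  simp only [hLog]
  exact ⟨sum_smul_symm_mfderiv_eq_zero_of_semiconj I mdifferentiable_mul_left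
      (fun i y => (ccsGeodesic_mul_left expm logm (t i) h y g₁).symm) hD₀ hD₀' _ _ heq₀,
    sum_smul_symm_mfderiv_eq_zero_of_semiconj I mdifferentiable_mul_left
      (fun i y => (ccsGeodesic_mul_left expm logm (t i) h g₀ y).symm) hD₁ hD₁' _ _ heq₁⟩

end
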